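/- For relatively prime positive integers s and t, the number a_{s,t}(n) of compositions of n satisfying s·c_{2i-1} > t·c_{2i} for all valid i equals the number of compositions of n all of whose parts are congruent to r + ⌈(r·t+1)/s⌉ modulo (s+t) for some r with 0 ≤ r ≤ s−1. -/

import Mathlib

def IsComposition (n : ℕ) (l : List ℕ) : Prop := (∀ x ∈ l, 0 < x) ∧ l.sum = n

/-- The scaled Arndt condition: `s * c_{2i-1} > t * c_{2i}` for each pair
(0-indexed: `s * l[2i] > t * l[2i+1]`). -/
def ArndtCond (s t : ℕ) (l : List ℕ) : Prop :=
  ∀ i : ℕ, 2 * i + 1 < l.length → t * l[2 * i + 1]! < s * l[2 * i]!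

/-- `a_{s,t}(n)`: the number of scaled Arndt compositions of `n`. -/
noncomputable def arndtCount (s t n : ℕ) : ℕ :=
  Nat.card {l : List ℕ // IsComposition n l ∧ ArndtCond s t l}

noncomputable def compCount (A : Set ℕ) (n : ℕ) : ℕ :=
  Nat.card {l : List ℕ // IsComposition n l ∧ ∀ x ∈ l, x ∈ A}

/-!
Let `a` be the generating function of the Arndt compositions. Such a composition is empty, a
single part, or an admissible pair `(c₁, c₂)` followed by another Arndt composition, so
`a = 1 / (1 - X) + P a`, where `P` counts the admissible pairs by their sum. Counting them gives
`P m = m - 1 - ⌊t m / (s + t)⌋`, hence `χ = X + (1 - X) P` for the indicator `χ` of the positive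
`m` with `t ≤ t m mod (s + t)`. Therefore `(1 - χ) a = 1`, the equation satisfied by the generating
function of compositions with parts in `{χ = 1}`. That set is the one of the statement, because
`t (r + ⌈(r t + 1) / s⌉) ≡ t + (r t mod s) (mod s + t)`, `r ↦ r t mod s` permutes `[0, s)`, and
`t` is invertible modulo `s + t`.
-/

open Finset PowerSeries

theorem Nat.add_one_ceilDiv {b : ℕ} (hb : 0 < b) (a : ℕ) : (a + 1) ⌈/⌉ b = a / b + 1 := by
  rw [ceilDiv_eq_add_pred_div, show a + 1 + b - 1 = a + b by omega, Nat.add_div_right _ hb]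

theorem Finset.sum_antidiagonal_antidiagonal_assoc {A M : Type*} [AddCommMonoid A]
    [HasAntidiagonal A] [AddCommMonoid M] (f : A → A → A → M) (n : A) :
    ∑ x ∈ antidiagonal n, ∑ y ∈ antidiagonal x.2, f x.1 y.1 y.2 =
      ∑ x ∈ antidiagonal n, ∑ y ∈ antidiagonal x.1, f y.1 y.2 x.2 := by
  simp only [sum_sigma']
  refine sum_nbij' (fun ⟨⟨i, _⟩, ⟨j, k⟩⟩ ↦ ⟨(i + j, k), (i, j)⟩)
    (fun ⟨⟨_, k⟩, ⟨i, j⟩⟩ ↦ ⟨(i, j + k), (j, k)⟩) ?_ ?_ ?_ ?_ ?_ <;>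
  aesop (add simp [add_assoc])

theorem PowerSeries.eq_of_recurrences {R : Type*} [CommRing R] {a c p q : R⟦X⟧}
    (ha : a = PowerSeries.mk 1 + p * a) (hc : c = 1 + q * c) (hpq : X * p + q = p + X) : a = c := by
  -- `(1 - q) a = (1 - X) (a - p a) = 1 = (1 - q) c`
  linear_combination (c * (1 - X)) * ha + c * mk_one_mul_one_sub_eq_one R - (c * a) * hpq - a * hc

noncomputable def compositions (n : ℕ) : Finset (List ℕ) :=
  (univ : Finset (Composition n)).image Composition.blocks

theorem mem_compositions {n : ℕ} {l : List ℕ} : l ∈ compositions n ↔ IsComposition n l := by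
  simp only [compositions, mem_image, mem_univ, true_and]
  exact ⟨by rintro ⟨c, rfl⟩; exact ⟨fun _ => c.blocks_pos, c.blocks_sum⟩,
    fun h => ⟨⟨l, h.1 _, h.2⟩, rfl⟩⟩

theorem natCard_isComposition_and (P : List ℕ → Prop) [DecidablePred P] (n : ℕ) :
    Nat.card {l : List ℕ // IsComposition n l ∧ P l} = #{l ∈ compositions n | P l} :=
  Nat.subtype_card _ fun l => by rw [mem_filter, mem_compositions]

theorem isComposition_nil_iff {n : ℕ} : IsComposition n [] ↔ n = 0 := by
  simp [IsComposition, eq_comm]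

theorem isComposition_cons_iff {x m : ℕ} {l : List ℕ} :
    IsComposition (x + m) (x :: l) ↔ 0 < x ∧ IsComposition m l := by
  simp only [IsComposition, List.forall_mem_cons, List.sum_cons, Nat.add_left_cancel_iff,
    and_assoc]

theorem compositions_zero : compositions 0 = {[]} := by
  ext l
  rw [mem_compositions, mem_singleton]
  refine ⟨fun ⟨hpos, hsum⟩ => ?_, by rintro rfl; exact isComposition_nil_iff.2 rfl⟩
  exact List.eq_nil_iff_forall_not_mem.2 fun x hx =>
    (hpos x hx).ne' (List.sum_eq_zero_iff.1 hsum x hx)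

theorem card_filter_compositions (P : List ℕ → Prop) [DecidablePred P] (n : ℕ) :
    #{l ∈ compositions n | P l} = (if n = 0 ∧ P [] then 1 else 0) +
      ∑ x ∈ antidiagonal n with 0 < x.1, #{l ∈ compositions x.2 | P (x.1 :: l)} := by
  rcases Nat.eq_zero_or_pos n with rfl | hn
  · by_cases h : P [] <;> simp [compositions_zero, filter_singleton, h]
  have hmaps : ∀ l ∈ {l ∈ compositions n | P l},
      (l.headI, l.tail.sum) ∈ {x ∈ antidiagonal n | 0 < x.1} := by
    intro l hl
    rw [mem_filter, mem_compositions] at hl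
    obtain ⟨hcomp, -⟩ := hl
    cases l with
    | nil => exact absurd (isComposition_nil_iff.1 hcomp) hn.ne'
    | cons x l =>
      simp only [mem_filter, HasAntidiagonal.mem_antidiagonal, List.headI_cons, List.tail_cons]
      exact ⟨by rw [← hcomp.2, List.sum_cons], hcomp.1 x List.mem_cons_self⟩
  rw [if_neg (by omega), zero_add, card_eq_sum_card_fiberwise hmaps]
  refine sum_congr rfl fun x hx => ?_
  rw [mem_filter, HasAntidiagonal.mem_antidiagonal] at hx
  refine card_nbij' List.tail (x.1 :: ·) ?_ ?_ ?_ ?_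
  · intro l hl
    simp only [coe_filter, Set.mem_ofPred_eq, mem_filter, mem_compositions] at hl ⊢
    obtain ⟨⟨hcomp, hP⟩, rfl⟩ := hl
    cases l with
    | nil => exact absurd (isComposition_nil_iff.1 hcomp) hn.ne'
    | cons y l => exact ⟨⟨fun z hz => hcomp.1 z (List.mem_cons_of_mem y hz), rfl⟩, hP⟩
  · intro l hl
    simp only [coe_filter, Set.mem_ofPred_eq, mem_filter, mem_compositions] at hl ⊢
    refine ⟨⟨?_, hl.2⟩, ?_⟩
    · rw [← hx.1]
      exact isComposition_cons_iff.2 ⟨hx.2, hl.1⟩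
    · rw [List.headI_cons, List.tail_cons, hl.1.2]
  · intro l hl
    simp only [coe_filter, Set.mem_ofPred_eq, mem_filter] at hl
    obtain ⟨-, rfl⟩ := hl
    cases l with
    | nil => exact absurd hx.2 (lt_irrefl 0)
    | cons y l => rfl
  · intro l _
    rfl

theorem compCount_eq (S : Set ℕ) [DecidablePred (· ∈ S)] (n : ℕ) :
    compCount S n = (if n = 0 then 1 else 0) +
      ∑ x ∈ antidiagonal n, (if 0 < x.1 ∧ x.1 ∈ S then 1 else 0) * compCount S x.2 := by
  simp only [compCount, natCard_isComposition_and]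
  rw [card_filter_compositions, sum_filter]
  simp only [List.forall_mem_cons, List.not_mem_nil, IsEmpty.forall_iff, implies_true, and_true]
  congr 1
  refine sum_congr rfl fun x _ => ?_
  by_cases hx : 0 < x.1 <;> by_cases hS : x.1 ∈ S <;> simp [hx, hS]

theorem arndtCond_nil (s t : ℕ) : ArndtCond s t [] := by
  simp [ArndtCond]

theorem arndtCond_singleton (s t x : ℕ) : ArndtCond s t [x] := by
  simp [ArndtCond]

theorem arndtCond_cons_cons {s t x y : ℕ} {l : List ℕ} :
    ArndtCond s t (x :: y :: l) ↔ t * y < s * x ∧ ArndtCond s t l := by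
  have shift (i : ℕ) : (x :: y :: l)[2 * (i + 1)]! = l[2 * i]! ∧
      (x :: y :: l)[2 * (i + 1) + 1]! = l[2 * i + 1]! := by
    simp [Nat.mul_succ]
  constructor
  · intro h
    refine ⟨by simpa using h 0 (by simp), fun i hi => ?_⟩
    simpa only [shift] using h (i + 1) (by simp; omega)
  · rintro ⟨hxy, h⟩ (_ | i) hi
    · simpa using hxy
    · simpa only [shift] using h i (by simp at hi; omega)

noncomputable def pairCount (s t m : ℕ) : ℕ :=
  #{x ∈ antidiagonal m | 0 < x.1 ∧ 0 < x.2 ∧ t * x.2 < s * x.1}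

open scoped Classical in
theorem card_filter_arndtCond_cons (s t d m : ℕ) :
    #{l ∈ compositions m | ArndtCond s t (d :: l)} = (if m = 0 then 1 else 0) +
      ∑ y ∈ antidiagonal m, if 0 < y.1 ∧ t * y.1 < s * d then arndtCount s t y.2 else 0 := by
  rw [card_filter_compositions, sum_filter]
  simp only [arndtCond_singleton, and_true, arndtCond_cons_cons]
  congr 1
  refine sum_congr rfl fun y _ => ?_
  by_cases hy : 0 < y.1 <;> by_cases hd : t * y.1 < s * d <;>
    simp [hy, hd, arndtCount, natCard_isComposition_and]

theorem arndtCount_eq (s t n : ℕ) :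
    arndtCount s t n = 1 + ∑ x ∈ antidiagonal n, pairCount s t x.1 * arndtCount s t x.2 := by
  classical
  rw [arndtCount, natCard_isComposition_and, card_filter_compositions]
  simp only [arndtCond_nil, and_true, card_filter_arndtCond_cons, sum_filter,
    sum_add_distrib, ite_sum_zero, ← ite_and]
  have hsingle : (if n = 0 then 1 else 0) +
      ∑ x ∈ antidiagonal n, (if 0 < x.1 ∧ x.2 = 0 then 1 else 0) = 1 := by
    rcases n with _ | n
    · simp
    · rw [sum_eq_single (n + 1, 0)] <;> aesop
  have hpairs := Finset.sum_antidiagonal_antidiagonal_assoc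
    (fun i j k => if 0 < i ∧ 0 < j ∧ t * j < s * i then arndtCount s t k else 0) n
  simp only [pairCount, card_filter, sum_mul, ite_mul, one_mul, zero_mul]
  rw [← add_assoc, hsingle, ← hpairs]

section

variable {s t : ℕ}

theorem mul_add_ceilDiv_mod (hs : 0 < s) (r : ℕ) :
    t * (r + (r * t + 1) ⌈/⌉ s) % (s + t) = t + r * t % s := by
  have hdiv := Nat.div_add_mod (r * t) s
  have hexpand : t * (r + (r * t + 1) ⌈/⌉ s) = t + r * t % s + (s + t) * (r * t / s) := by
    rw [Nat.add_one_ceilDiv hs]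
    linarith
  rw [hexpand, Nat.add_mul_mod_self_left, Nat.mod_eq_of_lt (by linarith [Nat.mod_lt (r * t) hs])]

theorem exists_mod_eq_ceilDiv_iff (hs : 0 < s) (hco : s.Coprime t) (x : ℕ) :
    (∃ r < s, x % (s + t) = (r + (r * t + 1) ⌈/⌉ s) % (s + t)) ↔ t ≤ t * x % (s + t) := by
  have hcancel : Nat.gcd (s + t) t = 1 := Nat.coprime_add_self_left.2 hco
  have hmod (r : ℕ) : x % (s + t) = (r + (r * t + 1) ⌈/⌉ s) % (s + t) ↔
      t * x % (s + t) = t + r * t % s := by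
    rw [← mul_add_ceilDiv_mod hs r]
    exact ⟨Nat.ModEq.mul_left t, Nat.ModEq.cancel_left_of_coprime hcancel⟩
  simp only [hmod]
  constructor
  · rintro ⟨r, -, hr⟩
    omega
  · intro h
    have hlt : t * x % (s + t) - t < s := by
      have := Nat.mod_lt (t * x) (show 0 < s + t by omega)
      omega
    obtain ⟨r, hr, hrt⟩ := Nat.exists_mul_mod_eq_of_coprime (t * x % (s + t) - t) hco.symm hs.ne'
    refine ⟨r, hr, ?_⟩
    rw [mul_comm r t, hrt, Nat.mod_eq_of_lt hlt]
    omega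

theorem pairCount_eq (hq : 0 < s + t) (m : ℕ) :
    pairCount s t m = m - (t * m / (s + t) + 1) := by
  rw [pairCount, ← Nat.card_Ico]
  refine card_nbij' Prod.fst (fun a => (a, m - a)) ?_ ?_ ?_ ?_
  · rintro ⟨a, b⟩ h
    simp only [coe_filter, HasAntidiagonal.mem_antidiagonal, Set.mem_ofPred_eq, coe_Ico,
      Set.mem_Ico] at h ⊢
    obtain ⟨rfl, ha, hb, hlt⟩ := h
    rw [Nat.add_one_le_iff, Nat.div_lt_iff_lt_mul hq]
    constructor <;> nlinarith
  · intro a h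
    simp only [coe_filter, HasAntidiagonal.mem_antidiagonal, Set.mem_ofPred_eq, coe_Ico,
      Set.mem_Ico] at h ⊢
    rw [Nat.add_one_le_iff, Nat.div_lt_iff_lt_mul hq] at h
    obtain ⟨hlt, ham⟩ := h
    obtain ⟨b, rfl⟩ := Nat.exists_eq_add_of_lt ham
    refine ⟨by omega, Nat.pos_of_ne_zero (by rintro rfl; simp at hlt), by omega, ?_⟩
    rw [show a + b + 1 - a = b + 1 by omega]
    nlinarith
  · rintro ⟨a, b⟩ h
    simp only [coe_filter, HasAntidiagonal.mem_antidiagonal, Set.mem_ofPred_eq] at h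
    simp [← h.1]
  · intro a _
    rfl

theorem pairCount_succ_add (hs : 0 < s) (m : ℕ) :
    pairCount s t (m + 1) + (if m = 0 then 1 else 0) =
      pairCount s t m + (if t ≤ t * (m + 1) % (s + t) then 1 else 0) := by
  have hq : 0 < s + t := by omega
  have ht : t < s + t := by omega
  rcases m.eq_zero_or_pos with rfl | hm
  · simp [pairCount_eq hq, Nat.div_eq_of_lt ht, Nat.mod_eq_of_lt ht]
  have hdiv : t * (m + 1) / (s + t) =
      t * m / (s + t) + (if s + t ≤ t * m % (s + t) + t then 1 else 0) := by
    rw [mul_add_one, Nat.add_div hq, Nat.div_eq_of_lt ht, Nat.mod_eq_of_lt ht, add_zero]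
  have hmod : t * (m + 1) % (s + t) = (t * m % (s + t) + t) % (s + t) := by
    rw [mul_add_one, Nat.add_mod, Nat.mod_eq_of_lt ht]
  have hlt : t * m % (s + t) < s + t := Nat.mod_lt _ hq
  have hk : t * m / (s + t) < m := (Nat.div_lt_iff_lt_mul hq).2 (by nlinarith)
  rw [pairCount_eq hq, pairCount_eq hq, hdiv, hmod, if_neg hm.ne']
  generalize t * m % (s + t) = u at *
  generalize t * m / (s + t) = k at *
  rcases lt_or_ge (u + t) (s + t) with hwrap | hwrap
  · rw [Nat.mod_eq_of_lt hwrap]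
    split_ifs <;> omega
  · rw [Nat.mod_eq_sub_mod hwrap, Nat.mod_eq_of_lt (show u + t - (s + t) < s + t by omega)]
    split_ifs <;> omega

end

noncomputable def ogf (f : ℕ → ℕ) : ℤ⟦X⟧ :=
  PowerSeries.mk fun n => (f n : ℤ)

@[simp]
theorem coeff_ogf (f : ℕ → ℕ) (n : ℕ) : coeff n (ogf f) = f n :=
  coeff_mk _ _

theorem coeff_ogf_mul (f g : ℕ → ℕ) (n : ℕ) :
    coeff n (ogf f * ogf g) = ((∑ x ∈ antidiagonal n, f x.1 * g x.2 : ℕ) : ℤ) := by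
  simp [coeff_mul]

theorem ogf_compCount (S : Set ℕ) [DecidablePred (· ∈ S)] :
    ogf (compCount S) = 1 + ogf (fun d => if 0 < d ∧ d ∈ S then 1 else 0) * ogf (compCount S) := by
  ext n
  rw [map_add, coeff_ogf_mul, coeff_ogf, compCount_eq, coeff_one]
  push_cast
  rfl

theorem ogf_arndtCount (s t : ℕ) :
    ogf (arndtCount s t) = PowerSeries.mk 1 + ogf (pairCount s t) * ogf (arndtCount s t) := by
  ext n
  rw [map_add, coeff_ogf_mul, coeff_ogf, arndtCount_eq, coeff_mk]
  push_cast
  rfl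

theorem X_mul_ogf_pairCount_add {s t : ℕ} (hs : 0 < s) :
    X * ogf (pairCount s t) + ogf (fun d => if 0 < d ∧ t ≤ t * d % (s + t) then 1 else 0) =
      ogf (pairCount s t) + X := by
  ext (_ | m) <;> rw [map_add, map_add, coeff_ogf, coeff_ogf, coeff_X]
  · simp [coeff_zero_X_mul, pairCount_eq (show 0 < s + t by omega)]
  · rw [coeff_succ_X_mul, coeff_ogf]
    have := pairCount_succ_add (t := t) hs m
    simp only [Nat.succ_pos, true_and, Nat.add_eq_right]
    exact_mod_cast this.symm

theorem arndt_eq_congruence_count_general (s t n : ℕ) (hs : 0 < s)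
    (hco : Nat.Coprime s t) :
    arndtCount s t n =
      compCount {x : ℕ | ∃ r < s, x % (s + t) = (r + (r * t + 1) ⌈/⌉ s) % (s + t)} n := by
  have hA : {x : ℕ | ∃ r < s, x % (s + t) = (r + (r * t + 1) ⌈/⌉ s) % (s + t)} =
      {x | t ≤ t * x % (s + t)} :=
    Set.ext (exists_mod_eq_ceilDiv_iff hs hco)
  rw [hA]
  have key := PowerSeries.eq_of_recurrences (ogf_arndtCount s t)
    (ogf_compCount {x | t ≤ t * x % (s + t)}) (X_mul_ogf_pairCount_add hs)
  simpa only [coeff_ogf, Nat.cast_inj] using congr(coeff n $key)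

theorem arndt_eq_congruence_count (s t n : ℕ) (hs : 0 < s) (ht : 0 < t)
    (hco : Nat.Coprime s t) :
    arndtCount s t n =
      compCount {x : ℕ | ∃ r < s, x % (s + t) = (r + (r * t + 1) ⌈/⌉ s) % (s + t)} n :=
  arndt_eq_congruence_count_general s t n hs hco
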